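/- arXiv:1708.02854 — 9 statements merged into one kernel-verified Lean document; each statement's English description precedes it below -/
import Mathlib

section
/- Let β ∈ (0,1], and let p, q be real numbers with 1 ≤ p ≤ q < ∞. There exists a constant C > 0, depending only on β, p and q, such that for every R > 0 and every function f : [0,1] → ℝ belonging to the Hölder ball C^β(R), with f not identically zero, one has ‖f‖_q ≤ C · ‖f‖_p · max(1, R/‖f‖_p)^{(1/p − 1/q)/(β + 1/p)}. -/
/-!
Let `M = |f x₀|` be the maximum of `|f|` on `[0, 1]`. The Hölder bound keeps `|f| ≥ M / 2` on an
interval of length `h = min 1 ((M / 2R) ^ (1/β))` around `x₀`, so `(M / 2) ^ p * h ≤ ‖f‖_p ^ p`;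
in either case of the minimum this gives `M ≤ 2 ‖f‖_p max(1, R / ‖f‖_p) ^ (1 / (βp + 1))`.
Feeding this into `‖f‖_q ≤ M ^ (1 - p/q) ‖f‖_p ^ (p/q)` yields the exponent
`(1 - p/q) / (βp + 1) = (1/p - 1/q) / (β + 1/p)`.
-/

open MeasureTheory Set Filter Topology

lemma ContinuousOn.of_dist_le_mul_rpow {X Y : Type*} [PseudoMetricSpace X] [PseudoMetricSpace Y]
    {f : X → Y} {s : Set X} {R β : ℝ} (hβ : 0 < β)
    (hf : ∀ x ∈ s, ∀ y ∈ s, dist (f x) (f y) ≤ R * dist x y ^ β) : ContinuousOn f s := by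
  intro x hx
  have hlim : Tendsto (fun y => R * dist y x ^ β) (𝓝[s] x) (𝓝 0) := by
    have hcont : Continuous fun y => R * dist y x ^ β :=
      continuous_const.mul ((continuous_id.dist continuous_const).rpow_const fun _ => Or.inr hβ.le)
    simpa [Real.zero_rpow hβ.ne'] using (hcont.tendsto x).mono_left nhdsWithin_le_nhds
  exact tendsto_iff_dist_tendsto_zero.2 <| squeeze_zero' (Eventually.of_forall fun _ => dist_nonneg)
    (eventually_nhdsWithin_of_forall fun y hy => hf y hy x hx) hlim

lemma exists_Icc_add_subset_Icc_inter {l r x₀ h : ℝ} (hx₀ : x₀ ∈ Icc l r) (hh : h ≤ r - l) :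
    ∃ a, Icc a (a + h) ⊆ Icc l r ∩ Icc (x₀ - h) (x₀ + h) := by
  refine ⟨min x₀ (r - h), fun x hx => ?_⟩
  have hh₀ : 0 ≤ h := by linarith [hx.1, hx.2]
  have hl : l ≤ min x₀ (r - h) := le_min hx₀.1 (by linarith)
  have hx₀h : x₀ - h ≤ min x₀ (r - h) := le_min (by linarith) (by linarith [hx₀.2])
  have hxr : x ≤ r := hx.2.trans (by linarith [min_le_right x₀ (r - h)])
  have hxx₀ : x ≤ x₀ + h := hx.2.trans (by linarith [min_le_left x₀ (r - h)])
  exact ⟨⟨hl.trans hx.1, hxr⟩, hx₀h.trans hx.1, hxx₀⟩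

lemma integral_abs_rpow_le_of_abs_le {α : Type*} [MeasurableSpace α] {μ : Measure α} {f : α → ℝ}
    {p q M : ℝ} (hp : 0 ≤ p) (hpq : p ≤ q) (hf : ∀ᵐ x ∂μ, |f x| ≤ M)
    (hint : Integrable (fun x => |f x| ^ p) μ) :
    ∫ x, |f x| ^ q ∂μ ≤ M ^ (q - p) * ∫ x, |f x| ^ p ∂μ := by
  rw [← integral_const_mul]
  refine integral_mono_of_nonneg (.of_forall fun x => by positivity) (hint.const_mul _) ?_
  filter_upwards [hf] with x hx
  calc |f x| ^ q = |f x| ^ (q - p) * |f x| ^ p := by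
        rw [← Real.rpow_add_of_nonneg (abs_nonneg _) (sub_nonneg.2 hpq) hp, sub_add_cancel]
    _ ≤ M ^ (q - p) * |f x| ^ p := by gcongr

lemma rpow_integral_abs_rpow_le_of_abs_le {α : Type*} [MeasurableSpace α] {μ : Measure α}
    {f : α → ℝ} {p q M : ℝ} (hp : 0 < p) (hpq : p ≤ q) (hM : 0 ≤ M) (hf : ∀ᵐ x ∂μ, |f x| ≤ M)
    (hint : Integrable (fun x => |f x| ^ p) μ) :
    (∫ x, |f x| ^ q ∂μ) ^ (1 / q) ≤
      M ^ (1 - p / q) * ((∫ x, |f x| ^ p ∂μ) ^ (1 / p)) ^ (p / q) := by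
  have hq : 0 < q := hp.trans_le hpq
  have hJ : 0 ≤ ∫ x, |f x| ^ p ∂μ := integral_nonneg fun x => by positivity
  calc (∫ x, |f x| ^ q ∂μ) ^ (1 / q) ≤ (M ^ (q - p) * ∫ x, |f x| ^ p ∂μ) ^ (1 / q) := by
        gcongr
        exact integral_abs_rpow_le_of_abs_le hp.le hpq hf hint
    _ = M ^ (1 - p / q) * ((∫ x, |f x| ^ p ∂μ) ^ (1 / p)) ^ (p / q) := by
        rw [Real.mul_rpow (by positivity) hJ, ← Real.rpow_mul hM, ← Real.rpow_mul hJ]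
        congr 2 <;> field_simp

lemma le_max_one_rpow_of_rpow_mul_min_le_one {u v β p : ℝ} (hu : 0 < u) (hv : 0 < v)
    (hβ : 0 < β) (hp : 0 < p) (h : u ^ p * min 1 ((u / v) ^ β⁻¹) ≤ 1) :
    u ≤ max 1 v ^ (β * p + 1)⁻¹ := by
  by_contra! hlt
  have hexp : 0 < β * p + 1 := by positivity
  have hu1 : 1 < u := (Real.one_le_rpow (le_max_left 1 v) (by positivity)).trans_lt hlt
  have hvu : v < u ^ (β * p + 1) :=
    calc v ≤ max 1 v := le_max_right 1 v
      _ = (max 1 v ^ (β * p + 1)⁻¹) ^ (β * p + 1) :=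
          (Real.rpow_inv_rpow (by positivity) hexp.ne').symm
      _ < u ^ (β * p + 1) := Real.rpow_lt_rpow (by positivity) hlt hexp
  have hsplit : u ^ p * (u / v) ^ β⁻¹ = (u ^ (β * p + 1) / v) ^ β⁻¹ := by
    have : (β * p + 1) * β⁻¹ = p + β⁻¹ := by field_simp
    rw [Real.div_rpow hu.le hv.le, Real.div_rpow (by positivity) hv.le, ← Real.rpow_mul hu.le,
      this, Real.rpow_add hu, mul_div_assoc]
  have h₁ : 1 < u ^ p := Real.one_lt_rpow hu1 hp
  have h₂ : 1 < u ^ p * (u / v) ^ β⁻¹ :=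
    hsplit ▸ Real.one_lt_rpow ((one_lt_div hv).2 hvu) (inv_pos.2 hβ)
  rw [mul_min_of_nonneg _ _ (by positivity), mul_one] at h
  exact (lt_min h₁ h₂).not_ge h

lemma rpow_mul_rpow_one_sub_le {M A c m t s : ℝ} (hM : 0 ≤ M) (hA : 0 ≤ A) (hc : 1 ≤ c)
    (hm : 0 ≤ m) (hs₀ : 0 ≤ s) (hs₁ : s ≤ 1) (h : M ≤ c * A * m ^ t) :
    M ^ s * A ^ (1 - s) ≤ c * A * m ^ (t * s) := by
  calc M ^ s * A ^ (1 - s) ≤ (c * A * m ^ t) ^ s * A ^ (1 - s) := by gcongr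
    _ = c ^ s * m ^ (t * s) * (A ^ s * A ^ (1 - s)) := by
        rw [Real.mul_rpow (by positivity) (by positivity), Real.mul_rpow (by positivity) hA,
          ← Real.rpow_mul hm]
        ring
    _ = c ^ s * m ^ (t * s) * A := by
        rw [← Real.rpow_add' hA (by simp), add_sub_cancel, Real.rpow_one]
    _ ≤ c * A * m ^ (t * s) := by
        rw [mul_right_comm]
        gcongr
        simpa using Real.rpow_le_rpow_of_exponent_le hc hs₁

lemma rpow_mul_min_le_integral_of_holder {f : ℝ → ℝ} {β p R : ℝ} (hβ : 0 < β) (hp : 0 ≤ p)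
    (hR : 0 < R) (hf : ∀ x ∈ Icc (0:ℝ) 1, ∀ y ∈ Icc (0:ℝ) 1, |f x - f y| ≤ R * |x - y| ^ β)
    (hint : IntegrableOn (fun x => |f x| ^ p) (Icc 0 1)) {x₀ : ℝ} (hx₀ : x₀ ∈ Icc (0:ℝ) 1) :
    (|f x₀| / 2) ^ p * min 1 ((|f x₀| / (2 * R)) ^ β⁻¹) ≤ ∫ x in Icc (0:ℝ) 1, |f x| ^ p := by
  set M := |f x₀|
  set h := min 1 ((M / (2 * R)) ^ β⁻¹)
  have hnear : ∀ x ∈ Icc 0 1 ∩ Icc (x₀ - h) (x₀ + h), M / 2 ≤ |f x| := by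
    rintro x ⟨hx, hxh⟩
    have hdist : |x₀ - x| ≤ (M / (2 * R)) ^ β⁻¹ :=
      (abs_sub_le_iff.2 ⟨sub_le_comm.1 hxh.1, sub_le_iff_le_add'.2 hxh.2⟩).trans (min_le_right _ _)
    have hosc : R * |x₀ - x| ^ β ≤ M / 2 :=
      calc R * |x₀ - x| ^ β ≤ R * ((M / (2 * R)) ^ β⁻¹) ^ β := by gcongr
        _ = M / 2 := by rw [Real.rpow_inv_rpow (by positivity) hβ.ne']; field_simp
    have := (abs_sub_abs_le_abs_sub (f x₀) (f x)).trans ((hf x₀ hx₀ x hx).trans hosc)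
    linarith
  obtain ⟨a, ha⟩ := exists_Icc_add_subset_Icc_inter hx₀ (h := h) (by simp [h])
  have hsub : Icc a (a + h) ⊆ Icc 0 1 := ha.trans inter_subset_left
  have hh : a ≤ a + h := le_add_of_nonneg_right (by positivity)
  calc (M / 2) ^ p * h = (M / 2) ^ p * volume.real (Icc a (a + h)) := by
        rw [Real.volume_real_Icc_of_le hh, add_sub_cancel_left]
    _ ≤ ∫ x in Icc a (a + h), |f x| ^ p :=
        setIntegral_ge_of_const_le_real measurableSet_Icc measure_Icc_lt_top.ne
          (fun x hx => by gcongr; exact hnear x (ha hx)) (hint.mono_set hsub)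
    _ ≤ ∫ x in Icc (0:ℝ) 1, |f x| ^ p :=
        setIntegral_mono_set hint (ae_of_all _ fun x => by positivity) hsub.eventuallyLE

lemma abs_le_mul_max_one_rpow_of_holder {f : ℝ → ℝ} {β p R : ℝ} (hβ : 0 < β) (hp : 0 < p)
    (hR : 0 < R) (hf : ∀ x ∈ Icc (0:ℝ) 1, ∀ y ∈ Icc (0:ℝ) 1, |f x - f y| ≤ R * |x - y| ^ β)
    (hint : IntegrableOn (fun x => |f x| ^ p) (Icc 0 1)) {x₀ : ℝ} (hx₀ : x₀ ∈ Icc (0:ℝ) 1) :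
    |f x₀| ≤ 2 * (∫ x in Icc (0:ℝ) 1, |f x| ^ p) ^ (1 / p) *
      max 1 (R / (∫ x in Icc (0:ℝ) 1, |f x| ^ p) ^ (1 / p)) ^ (β * p + 1)⁻¹ := by
  set J := ∫ x in Icc (0:ℝ) 1, |f x| ^ p
  set M := |f x₀|
  obtain hM | hM : 0 = M ∨ 0 < M := (abs_nonneg (f x₀)).eq_or_lt
  · rw [← hM]
    have : 0 ≤ J := setIntegral_nonneg measurableSet_Icc fun x _ => by positivity
    positivity
  have hlower := rpow_mul_min_le_integral_of_holder hβ hp.le hR hf hint hx₀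
  have hJ : 0 < J := lt_of_lt_of_le (by positivity) hlower
  set A := J ^ (1 / p) with hAJ
  have hA : 0 < A := Real.rpow_pos_of_pos hJ _
  have hAp : A ^ p = J := by
    rw [hAJ, ← Real.rpow_mul hJ.le, one_div_mul_cancel hp.ne', Real.rpow_one]
  -- `hlower` rescaled by `u = M / (2A)`, `v = R / A`, since `M / (2R) = u / v`
  have hscaled : (M / (2 * A)) ^ p * min 1 ((M / (2 * A) / (R / A)) ^ β⁻¹) ≤ 1 := by
    have hMA : M / (2 * A) = M / 2 / A := by ring
    have hMR : M / (2 * A) / (R / A) = M / (2 * R) := by field_simp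
    rw [hMR, hMA, Real.div_rpow (by positivity) hA.le, hAp, div_mul_eq_mul_div, div_le_one hJ]
    exact hlower
  calc M = 2 * A * (M / (2 * A)) := by field_simp
    _ ≤ 2 * A * max 1 (R / A) ^ (β * p + 1)⁻¹ := by
        gcongr
        exact le_max_one_rpow_of_rpow_mul_min_le_one (by positivity) (by positivity) hβ hp hscaled

theorem lp_lq_interpolation_holder_general (β p q : ℝ) (hβ0 : 0 < β)
    (hp : 1 ≤ p) (hpq : p ≤ q) :
    ∃ C : ℝ, 0 < C ∧ ∀ R : ℝ, 0 < R → ∀ f : ℝ → ℝ,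
      (∀ x ∈ Set.Icc (0:ℝ) 1, ∀ y ∈ Set.Icc (0:ℝ) 1, |f x - f y| ≤ R * |x - y| ^ β) →
      (∃ x ∈ Set.Icc (0:ℝ) 1, f x ≠ 0) →
      (∫ x in Set.Icc (0:ℝ) 1, |f x| ^ q) ^ (1/q) ≤
        C * (∫ x in Set.Icc (0:ℝ) 1, |f x| ^ p) ^ (1/p) *
          (max 1 (R / (∫ x in Set.Icc (0:ℝ) 1, |f x| ^ p) ^ (1/p)))
            ^ ((1/p - 1/q) / (β + 1/p)) := by
  have hp₀ : 0 < p := by linarith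
  have hq₀ : 0 < q := by linarith
  refine ⟨2, two_pos, fun R hR f hf _ => ?_⟩
  have hcont : ContinuousOn f (Icc 0 1) :=
    .of_dist_le_mul_rpow hβ0 (by simpa only [Real.dist_eq] using hf)
  have hint : IntegrableOn (fun x => |f x| ^ p) (Icc 0 1) :=
    (hcont.abs.rpow_const fun _ _ => Or.inr hp₀.le).integrableOn_Icc
  obtain ⟨x₀, hx₀, hmax⟩ := isCompact_Icc.exists_isMaxOn (nonempty_Icc.2 zero_le_one) hcont.abs
  have hθ : (1 / p - 1 / q) / (β + 1 / p) = (β * p + 1)⁻¹ * (1 - p / q) := by field_simp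
  rw [hθ]
  calc (∫ x in Icc (0:ℝ) 1, |f x| ^ q) ^ (1 / q)
      ≤ |f x₀| ^ (1 - p / q) * ((∫ x in Icc (0:ℝ) 1, |f x| ^ p) ^ (1 / p)) ^ (1 - (1 - p / q)) := by
        rw [sub_sub_cancel]
        exact rpow_integral_abs_rpow_le_of_abs_le hp₀ hpq (abs_nonneg _)
          (ae_restrict_of_forall_mem measurableSet_Icc fun x hx => hmax hx) hint
    _ ≤ _ := rpow_mul_rpow_one_sub_le (abs_nonneg _)
        (Real.rpow_nonneg (setIntegral_nonneg measurableSet_Icc fun x _ => by positivity) _)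
        one_le_two (by positivity) (sub_nonneg.2 ((div_le_one hq₀).2 hpq))
        (sub_le_self _ (by positivity))
        (abs_le_mul_max_one_rpow_of_holder hβ0 hp₀ hR hf hint hx₀)

/-- Interpolation inequality between L^p and L^q norms on Hölder balls. -/
theorem lp_lq_interpolation_holder (β p q : ℝ) (hβ0 : 0 < β) (hβ1 : β ≤ 1)
    (hp : 1 ≤ p) (hpq : p ≤ q) :
    ∃ C : ℝ, 0 < C ∧ ∀ R : ℝ, 0 < R → ∀ f : ℝ → ℝ,
      (∀ x ∈ Set.Icc (0:ℝ) 1, ∀ y ∈ Set.Icc (0:ℝ) 1, |f x - f y| ≤ R * |x - y| ^ β) →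
      (∃ x ∈ Set.Icc (0:ℝ) 1, f x ≠ 0) →
      (∫ x in Set.Icc (0:ℝ) 1, |f x| ^ q) ^ (1/q) ≤
        C * (∫ x in Set.Icc (0:ℝ) 1, |f x| ^ p) ^ (1/p) *
          (max 1 (R / (∫ x in Set.Icc (0:ℝ) 1, |f x| ^ p) ^ (1/p)))
            ^ ((1/p - 1/q) / (β + 1/p)) :=
  lp_lq_interpolation_holder_general β p q hβ0 hp hpq
end

section
/- Let β ∈ (0,1], R > 0, and let p be a real number with 1 ≤ p < ∞. Then every function f : [0,1] → ℝ belonging to the Hölder ball C^β(R) satisfies ‖f‖_p ≥ ‖f‖_∞ · min(1, ‖f‖_∞/R)^{1/(βp)} · (∫_0^1 (1 − y^β)^p dy)^{1/p}. -/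
/-!
Let `|f|` attain its maximum `M` at `x₀`. The Hölder condition gives `|f x| ≥ (M - R |x - x₀|^β)₊`.
This tent is a decreasing function of `|x - x₀|`, so folding `[0, 1]` at `x₀` shows that its `p`-th
power has integral over `[0, 1]` at least that of `t ↦ (M - R t^β)₊^p`, hence at least the integral
of the latter over `[0, δ]` with `δ = min(1, M/R)^{1/β} ≤ 1`. Since `R δ^β ≤ M`, substituting
`t = δ y` bounds this from below by `δ M^p ∫₀¹ (1 - y^β)^p dy`; take `p`-th roots.
-/

open MeasureTheory Set Filter Topology intervalIntegral

lemma continuousOn_of_abs_sub_le_mul_rpow {f : ℝ → ℝ} {s : Set ℝ} {R β : ℝ} (hβ : 0 < β)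
    (hf : ∀ x ∈ s, ∀ y ∈ s, |f x - f y| ≤ R * |x - y| ^ β) : ContinuousOn f s := by
  intro x hx
  rw [ContinuousWithinAt, tendsto_iff_norm_sub_tendsto_zero]
  have hbound : Continuous fun y => R * |y - x| ^ β := by
    have := Real.continuous_rpow_const hβ.le
    fun_prop
  refine squeeze_zero' (Eventually.of_forall fun _ => norm_nonneg _) ?_
    (by simpa [Real.zero_rpow hβ.ne'] using (hbound.tendsto x).mono_left nhdsWithin_le_nhds)
  filter_upwards [self_mem_nhdsWithin] with y hy
  exact hf y hy x hx

lemma integral_le_integral_comp_abs_sub {G : ℝ → ℝ} (hG : AntitoneOn G (Ici 0))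
    (hGc : Continuous G) {b x₀ : ℝ} (hx₀ : x₀ ∈ Icc 0 b) :
    ∫ t in 0..b, G t ≤ ∫ x in 0..b, G |x - x₀| := by
  have hGc' : Continuous fun x => G |x - x₀| := by fun_prop
  have hleft : ∫ x in 0..x₀, G |x - x₀| = ∫ t in 0..x₀, G t := by
    calc ∫ x in 0..x₀, G |x - x₀| = ∫ x in 0..x₀, G (x₀ - x) := by
          refine integral_congr fun x hx => ?_
          rw [uIcc_of_le hx₀.1] at hx
          simp only [abs_of_nonpos (sub_nonpos.2 hx.2), neg_sub]
      _ = ∫ t in 0..x₀, G t := by simp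
  have hright : ∫ t in x₀..b, G t ≤ ∫ x in x₀..b, G |x - x₀| := by
    refine integral_mono_on hx₀.2 (hGc.intervalIntegrable _ _) (hGc'.intervalIntegrable _ _)
      fun x hx => ?_
    have hx₀x : 0 ≤ x - x₀ := sub_nonneg.2 hx.1
    rw [abs_of_nonneg hx₀x]
    exact hG hx₀x (hx₀.1.trans hx.1) (by linarith [hx₀.1])
  rw [← integral_add_adjacent_intervals (hGc.intervalIntegrable 0 x₀)
      (hGc.intervalIntegrable x₀ b),
    ← integral_add_adjacent_intervals (hGc'.intervalIntegrable 0 x₀)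
      (hGc'.intervalIntegrable x₀ b), hleft]
  linarith

noncomputable def holderTent (M R β t : ℝ) : ℝ := max 0 (M - R * t ^ β)

section holderTent

variable {M R β : ℝ}

lemma holderTent_nonneg (t : ℝ) : 0 ≤ holderTent M R β t := le_max_left _ _

lemma continuous_holderTent (hβ : 0 < β) : Continuous (holderTent M R β) := by
  have := Real.continuous_rpow_const hβ.le
  unfold holderTent
  fun_prop

lemma continuous_holderTent_rpow (hβ : 0 < β) {p : ℝ} (hp : 0 ≤ p) :
    Continuous fun t => holderTent M R β t ^ p :=
  (Real.continuous_rpow_const hp).comp (continuous_holderTent hβ)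

lemma antitoneOn_holderTent_rpow (hR : 0 ≤ R) (hβ : 0 < β) {p : ℝ} (hp : 0 ≤ p) :
    AntitoneOn (fun t => holderTent M R β t ^ p) (Ici 0) :=
  fun _ hs _ _ hst => Real.rpow_le_rpow (holderTent_nonneg _) (max_le_max le_rfl <|
    sub_le_sub_left (mul_le_mul_of_nonneg_left (Real.rpow_le_rpow hs hst hβ.le) hR) M) hp

lemma holderTent_abs_sub_le {f : ℝ → ℝ} {s : Set ℝ}
    (hf : ∀ x ∈ s, ∀ y ∈ s, |f x - f y| ≤ R * |x - y| ^ β) {x₀ x : ℝ} (hx₀ : x₀ ∈ s)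
    (hx : x ∈ s) : holderTent |f x₀| R β |x - x₀| ≤ |f x| := by
  refine max_le (abs_nonneg _) ?_
  have := hf x₀ hx₀ x hx
  rw [abs_sub_comm x₀ x] at this
  linarith [abs_sub_abs_le_abs_sub (f x₀) (f x)]

lemma mul_one_sub_rpow_le_holderTent (hM : 0 ≤ M) (hR : 0 < R) (hβ : 0 < β) {y : ℝ}
    (hy : y ∈ Icc 0 1) : M * (1 - y ^ β) ≤ holderTent M R β (min 1 (M / R) ^ (1 / β) * y) := by
  have hm : 0 ≤ min 1 (M / R) := le_min zero_le_one (div_nonneg hM hR.le)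
  have hRm : R * min 1 (M / R) ≤ M := by
    calc R * min 1 (M / R) ≤ R * (M / R) := mul_le_mul_of_nonneg_left (min_le_right _ _) hR.le
      _ = M := mul_div_cancel₀ M hR.ne'
  refine le_max_of_le_right ?_
  rw [Real.mul_rpow (Real.rpow_nonneg hm _) hy.1, ← Real.rpow_mul hm, one_div_mul_cancel hβ.ne',
    Real.rpow_one]
  nlinarith [Real.rpow_nonneg hy.1 β]

lemma mul_integral_le_integral_holderTent_rpow (hM : 0 ≤ M) (hR : 0 < R) (hβ : 0 < β) {p : ℝ}
    (hp : 0 < p) :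
    min 1 (M / R) ^ (1 / β) * (M ^ p * ∫ y in 0..1, (1 - y ^ β) ^ p) ≤
      ∫ t in 0..1, holderTent M R β t ^ p := by
  set δ := min 1 (M / R) ^ (1 / β)
  have hm : 0 ≤ min 1 (M / R) := le_min zero_le_one (div_nonneg hM hR.le)
  have hδ0 : 0 ≤ δ := Real.rpow_nonneg hm _
  have hδ1 : δ ≤ 1 := Real.rpow_le_one hm (min_le_left _ _) (by positivity)
  have hGc := continuous_holderTent_rpow (M := M) (R := R) hβ hp.le
  have hpt : ∀ y ∈ Icc (0:ℝ) 1, M ^ p * (1 - y ^ β) ^ p ≤ holderTent M R β (δ * y) ^ p := by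
    intro y hy
    have h1 : 0 ≤ 1 - y ^ β := sub_nonneg.2 (Real.rpow_le_one hy.1 hy.2 hβ.le)
    rw [← Real.mul_rpow hM h1]
    exact Real.rpow_le_rpow (mul_nonneg hM h1) (mul_one_sub_rpow_le_holderTent hM hR hβ hy) hp.le
  calc δ * (M ^ p * ∫ y in 0..1, (1 - y ^ β) ^ p)
      = δ * ∫ y in 0..1, M ^ p * (1 - y ^ β) ^ p := by rw [intervalIntegral.integral_const_mul]
    _ ≤ δ * ∫ y in 0..1, holderTent M R β (δ * y) ^ p := by
      have := Real.continuous_rpow_const hβ.le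
      have := Real.continuous_rpow_const hp.le
      gcongr
      exact integral_mono_on zero_le_one (Continuous.intervalIntegrable (by fun_prop) _ _)
        ((hGc.comp (continuous_const_mul δ)).intervalIntegrable _ _) hpt
    _ = ∫ t in 0..δ, holderTent M R β t ^ p := by
      simpa using smul_integral_comp_mul_left (fun t => holderTent M R β t ^ p) δ (a := 0) (b := 1)
    _ ≤ ∫ t in 0..1, holderTent M R β t ^ p :=
      integral_mono_interval le_rfl hδ0 hδ1
        (Eventually.of_forall fun t => Real.rpow_nonneg (holderTent_nonneg t) p)
        (hGc.intervalIntegrable _ _)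

lemma mul_integral_le_integral_abs_rpow_of_holder {f : ℝ → ℝ}
    (hf : ∀ x ∈ Icc (0:ℝ) 1, ∀ y ∈ Icc (0:ℝ) 1, |f x - f y| ≤ R * |x - y| ^ β) (hR : 0 < R)
    (hβ : 0 < β) {p : ℝ} (hp : 0 < p) {x₀ : ℝ} (hx₀ : x₀ ∈ Icc (0:ℝ) 1) :
    min 1 (|f x₀| / R) ^ (1 / β) * (|f x₀| ^ p * ∫ y in 0..1, (1 - y ^ β) ^ p) ≤
      ∫ x in 0..1, |f x| ^ p := by
  have hGc := continuous_holderTent_rpow (M := |f x₀|) (R := R) hβ hp.le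
  have hfc : ContinuousOn f (Icc 0 1) := continuousOn_of_abs_sub_le_mul_rpow hβ hf
  calc _ ≤ ∫ t in 0..1, holderTent |f x₀| R β t ^ p :=
        mul_integral_le_integral_holderTent_rpow (abs_nonneg _) hR hβ hp
    _ ≤ ∫ x in 0..1, holderTent |f x₀| R β |x - x₀| ^ p :=
        integral_le_integral_comp_abs_sub (antitoneOn_holderTent_rpow hR.le hβ hp.le) hGc hx₀
    _ ≤ ∫ x in 0..1, |f x| ^ p :=
        integral_mono_on zero_le_one ((hGc.comp (by fun_prop)).intervalIntegrable _ _)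
          ((hfc.abs.rpow_const fun _ _ => Or.inr hp.le).intervalIntegrable_of_Icc zero_le_one)
          fun x hx => Real.rpow_le_rpow (holderTent_nonneg _) (holderTent_abs_sub_le hf hx₀ hx)
            hp.le

end holderTent

theorem lp_ge_sup_holder_general (β R p : ℝ) (hβ0 : 0 < β) (hR : 0 < R)
    (hp : 1 ≤ p) (f : ℝ → ℝ)
    (hf : ∀ x ∈ Set.Icc (0:ℝ) 1, ∀ y ∈ Set.Icc (0:ℝ) 1, |f x - f y| ≤ R * |x - y| ^ β) :
    (∫ x in Set.Icc (0:ℝ) 1, |f x| ^ p) ^ (1/p) ≥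
      (⨆ x : Set.Icc (0:ℝ) 1, |f x|) *
        (min 1 ((⨆ x : Set.Icc (0:ℝ) 1, |f x|) / R)) ^ (1 / (β * p)) *
        (∫ y in Set.Icc (0:ℝ) 1, (1 - y ^ β) ^ p) ^ (1/p) := by
  have hp0 : 0 < p := by linarith
  obtain ⟨x₀, hx₀, hmax⟩ := isCompact_Icc.exists_isMaxOn (nonempty_Icc.2 zero_le_one)
    (continuousOn_of_abs_sub_le_mul_rpow hβ0 hf).abs
  have key := mul_integral_le_integral_abs_rpow_of_holder hf hR hβ0 hp0 hx₀
  rw [hmax.iSup_eq hx₀]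
  set M := |f x₀|
  set m := min 1 (M / R)
  set I := ∫ y in 0..1, (1 - y ^ β) ^ p
  have hm : 0 ≤ m := le_min zero_le_one (div_nonneg (abs_nonneg _) hR.le)
  have hI : 0 ≤ I := integral_nonneg zero_le_one fun y hy =>
    Real.rpow_nonneg (sub_nonneg.2 (Real.rpow_le_one hy.1 hy.2 hβ0.le)) p
  have hroot : (m ^ (1 / β) * (M ^ p * I)) ^ (1 / p) = M * m ^ (1 / (β * p)) * I ^ (1 / p) := by
    rw [Real.mul_rpow (by positivity) (by positivity), Real.mul_rpow (by positivity) hI,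
      ← Real.rpow_mul hm, ← Real.rpow_mul (abs_nonneg _), mul_one_div_cancel hp0.ne',
      Real.rpow_one, one_div_mul_one_div]
    ring
  simp only [integral_Icc_eq_integral_Ioc, ← integral_of_le zero_le_one]
  rw [ge_iff_le, ← hroot]
  exact Real.rpow_le_rpow (by positivity) key (by positivity)

/-- Lower bound for the L^p norm in terms of the sup norm on Hölder balls. -/
theorem lp_ge_sup_holder (β R p : ℝ) (hβ0 : 0 < β) (hβ1 : β ≤ 1) (hR : 0 < R)
    (hp : 1 ≤ p) (f : ℝ → ℝ)
    (hf : ∀ x ∈ Set.Icc (0:ℝ) 1, ∀ y ∈ Set.Icc (0:ℝ) 1, |f x - f y| ≤ R * |x - y| ^ β) :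
    (∫ x in Set.Icc (0:ℝ) 1, |f x| ^ p) ^ (1/p) ≥
      (⨆ x : Set.Icc (0:ℝ) 1, |f x|) *
        (min 1 ((⨆ x : Set.Icc (0:ℝ) 1, |f x|) / R)) ^ (1 / (β * p)) *
        (∫ y in Set.Icc (0:ℝ) 1, (1 - y ^ β) ^ p) ^ (1/p) :=
  lp_ge_sup_holder_general β R p hβ0 hR hp f hf
end

section
/- Let β ∈ (0,1]. There exists a constant C' > 0, depending only on β, such that for every R > 0, every δ with 0 < δ ≤ R, and every pair of functions f, g ∈ C^β(R) with ‖f − g‖_2 ≤ δ, one has ‖f − g‖_∞ ≤ C' · R^{1/(2β+1)} · δ^{2β/(2β+1)}. -/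
/-!
If `|f - g|` equals `a` at `x₀`, the Hölder bounds keep `|f - g| ≥ a - 2R t^β` on an interval of
length `t` through `x₀`, so `(a - 2R t^β)² t ≤ δ²`. The bandwidth `t = (δ/R)^(2/(2β+1))`, which is
at most `1` because `δ ≤ R`, balances the two terms: with `K = R^(1/(2β+1)) δ^(2β/(2β+1))` one has
`R t^β = K` and `K² t = δ²`, whence `a ≤ 3K`.
-/

open MeasureTheory Set

theorem HolderOnWith.of_dist_le {X Y : Type*} [PseudoMetricSpace X] [PseudoMetricSpace Y]
    {C r : NNReal} {f : X → Y} {s : Set X}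
    (h : ∀ x ∈ s, ∀ y ∈ s, dist (f x) (f y) ≤ C * dist x y ^ (r : ℝ)) :
    HolderOnWith C r f s := by
  intro x hx y hy
  rw [edist_nndist, edist_nndist, ← ENNReal.coe_rpow_of_nonneg _ r.coe_nonneg,
    ← ENNReal.coe_mul, ENNReal.coe_le_coe, ← NNReal.coe_le_coe]
  exact_mod_cast h x hx y hy

def IsHolderOn (s : Set ℝ) (L β : ℝ) (h : ℝ → ℝ) : Prop :=
  ∀ x ∈ s, ∀ y ∈ s, |h x - h y| ≤ L * |x - y| ^ β

namespace IsHolderOn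

variable {s : Set ℝ} {L β : ℝ} {h : ℝ → ℝ}

theorem sub {L' : ℝ} {g : ℝ → ℝ} (hh : IsHolderOn s L β h) (hg : IsHolderOn s L' β g) :
    IsHolderOn s (L + L') β (fun x => h x - g x) := fun x hx y hy =>
  calc |h x - g x - (h y - g y)| ≤ |h x - h y| + |g x - g y| := by
        rw [sub_sub_sub_comm]; exact abs_sub _ _
    _ ≤ (L + L') * |x - y| ^ β := by linarith [hh x hx y hy, hg x hx y hy]

theorem continuousOn (hh : IsHolderOn s L β h) (hβ : 0 < β) : ContinuousOn h s := by
  refine (HolderOnWith.of_dist_le (C := L.toNNReal) (r := β.toNNReal)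
    fun x hx y hy => ?_).continuousOn (Real.toNNReal_pos.2 hβ)
  rw [Real.coe_toNNReal _ hβ.le, Real.dist_eq, Real.dist_eq]
  exact (hh x hx y hy).trans (by gcongr; exact Real.le_coe_toNNReal L)

end IsHolderOn

theorem exists_mem_Icc_add_subset_Icc {a b x t : ℝ} (hx : x ∈ Icc a b) (ht : 0 ≤ t)
    (htb : t ≤ b - a) : ∃ u, x ∈ Icc u (u + t) ∧ Icc u (u + t) ⊆ Icc a b := by
  refine ⟨min x (b - t), ⟨min_le_left _ _, ?_⟩, Icc_subset_Icc (le_min hx.1 ?_) ?_⟩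
  · rcases min_cases x (b - t) with h | h <;> linarith [hx.2]
  · linarith
  · linarith [min_le_right x (b - t)]

theorem IsHolderOn.sq_mul_le_setIntegral_sq {h : ℝ → ℝ} {a b L β t c x₀ : ℝ}
    (hh : IsHolderOn (Icc a b) L β h) (hL : 0 ≤ L) (hβ : 0 < β) (ht0 : 0 ≤ t) (htb : t ≤ b - a)
    (hx₀ : x₀ ∈ Icc a b) (hc0 : 0 ≤ c) (hc : c + L * t ^ β ≤ |h x₀|) :
    c ^ 2 * t ≤ ∫ x in Icc a b, h x ^ 2 := by
  obtain ⟨u, hx₀J, hJ⟩ := exists_mem_Icc_add_subset_Icc hx₀ ht0 htb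
  have hc_le : ∀ y ∈ Icc u (u + t), c ^ 2 ≤ h y ^ 2 := by
    intro y hy
    have hdist : |x₀ - y| ≤ t :=
      abs_sub_le_iff.2 ⟨by linarith [hy.1, hx₀J.2], by linarith [hy.2, hx₀J.1]⟩
    have hosc : |h x₀ - h y| ≤ L * t ^ β :=
      (hh x₀ hx₀ y (hJ hy)).trans (by gcongr)
    have : c ≤ |h y| := by linarith [abs_sub_abs_le_abs_sub (h x₀) (h y)]
    simpa only [sq_abs] using pow_le_pow_left₀ hc0 this 2
  have hint : IntegrableOn (fun x => h x ^ 2) (Icc a b) :=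
    ((hh.continuousOn hβ).pow 2).integrableOn_compact isCompact_Icc
  calc c ^ 2 * t = c ^ 2 * volume.real (Icc u (u + t)) := by
        rw [Real.volume_real_Icc_of_le (by linarith), add_sub_cancel_left]
    _ ≤ ∫ x in Icc u (u + t), h x ^ 2 :=
        setIntegral_ge_of_const_le_real measurableSet_Icc measure_Icc_lt_top.ne hc_le
          (hint.mono_set hJ)
    _ ≤ ∫ x in Icc a b, h x ^ 2 :=
        setIntegral_mono_set hint (ae_of_all _ fun x => sq_nonneg _) (ae_of_all _ hJ)

theorem holder_bandwidth_identities {β R δ : ℝ} (hβ : 0 ≤ β) (hR : 0 < R) (hδ : 0 < δ) :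
    R * ((δ / R) ^ (2 / (2 * β + 1))) ^ β = R ^ (1 / (2 * β + 1)) * δ ^ (2 * β / (2 * β + 1)) ∧
    (R ^ (1 / (2 * β + 1)) * δ ^ (2 * β / (2 * β + 1))) ^ 2 * (δ / R) ^ (2 / (2 * β + 1)) =
      δ ^ 2 := by
  have hp : 2 * β + 1 ≠ 0 := by positivity
  obtain ⟨a, rfl⟩ : ∃ a, Real.exp a = R := ⟨_, Real.exp_log hR⟩
  obtain ⟨b, rfl⟩ : ∃ b, Real.exp b = δ := ⟨_, Real.exp_log hδ⟩
  simp only [← Real.exp_sub, ← Real.exp_mul, ← Real.exp_add, ← Real.exp_nat_mul]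
  constructor <;> congr 1 <;> field_simp <;> ring

theorem sup_norm_diff_holder_general (β : ℝ) (hβ0 : 0 < β) :
    ∃ C' : ℝ, 0 < C' ∧ ∀ R : ℝ, 0 < R → ∀ δ : ℝ, 0 < δ → δ ≤ R → ∀ f g : ℝ → ℝ,
      (∀ x ∈ Set.Icc (0:ℝ) 1, ∀ y ∈ Set.Icc (0:ℝ) 1, |f x - f y| ≤ R * |x - y| ^ β) →
      (∀ x ∈ Set.Icc (0:ℝ) 1, ∀ y ∈ Set.Icc (0:ℝ) 1, |g x - g y| ≤ R * |x - y| ^ β) →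
      (∫ x in Set.Icc (0:ℝ) 1, |f x - g x| ^ (2:ℝ)) ^ ((1:ℝ)/2) ≤ δ →
      (⨆ x : Set.Icc (0:ℝ) 1, |f x - g x|) ≤
        C' * R ^ (1 / (2 * β + 1)) * δ ^ (2 * β / (2 * β + 1)) := by
  refine ⟨3, by norm_num, fun R hR δ hδ hδR f g hf hg hL2 => ?_⟩
  rw [mul_assoc]
  set K := R ^ (1 / (2 * β + 1)) * δ ^ (2 * β / (2 * β + 1))
  set t := (δ / R) ^ (2 / (2 * β + 1))
  obtain ⟨hRt, hKt⟩ := holder_bandwidth_identities hβ0.le hR hδ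
  have hK0 : 0 < K := by positivity
  have ht0 : 0 < t := by positivity
  have ht1 : t ≤ 1 := Real.rpow_le_one (by positivity) ((div_le_one hR).2 hδR) (by positivity)
  have hI : ∫ x in Icc 0 1, (f x - g x) ^ 2 ≤ δ ^ 2 := by
    simp only [Real.rpow_two, sq_abs, ← Real.sqrt_eq_rpow] at hL2
    exact (Real.sqrt_le_left hδ.le).1 hL2
  have hfg : IsHolderOn (Icc 0 1) (R + R) β (fun x => f x - g x) := IsHolderOn.sub hf hg
  have : Nonempty (Icc (0:ℝ) 1) := ⟨⟨0, by norm_num⟩⟩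
  refine ciSup_le fun ⟨x, hx⟩ => ?_
  by_contra! hlt
  have hmass := hfg.sq_mul_le_setIntegral_sq (c := |f x - g x| - 2 * K) (by positivity) hβ0
    ht0.le (by simpa using ht1) hx (by linarith) (by linarith)
  have hsq : (|f x - g x| - 2 * K) ^ 2 ≤ K ^ 2 :=
    le_of_mul_le_mul_right (hmass.trans (hI.trans hKt.ge)) ht0
  nlinarith

/-- Sup-norm bound on the difference of two Hölder functions that are L²-close. -/
theorem sup_norm_diff_holder (β : ℝ) (hβ0 : 0 < β) (hβ1 : β ≤ 1) :
    ∃ C' : ℝ, 0 < C' ∧ ∀ R : ℝ, 0 < R → ∀ δ : ℝ, 0 < δ → δ ≤ R → ∀ f g : ℝ → ℝ,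
      (∀ x ∈ Set.Icc (0:ℝ) 1, ∀ y ∈ Set.Icc (0:ℝ) 1, |f x - f y| ≤ R * |x - y| ^ β) →
      (∀ x ∈ Set.Icc (0:ℝ) 1, ∀ y ∈ Set.Icc (0:ℝ) 1, |g x - g y| ≤ R * |x - y| ^ β) →
      (∫ x in Set.Icc (0:ℝ) 1, |f x - g x| ^ (2:ℝ)) ^ ((1:ℝ)/2) ≤ δ →
      (⨆ x : Set.Icc (0:ℝ) 1, |f x - g x|) ≤
        C' * R ^ (1 / (2 * β + 1)) * δ ^ (2 * β / (2 * β + 1)) :=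
  sup_norm_diff_holder_general β hβ0
end

section
/- Let β ∈ (0,1], R > 0, let q ≥ 0 be a real number, and let n > 0. Then ∫_0^{2R} u^q · exp(− n β (2R)^{−1/β} u^{(β+1)/β} / (β+1)) du ≤ ((β+1)/β)^{(βq−1)/(β+1)} · (2R)^{(q+1)/(β+1)} · Γ(β(q+1)/(β+1)) · n^{−β(q+1)/(β+1)}, where Γ denotes the Gamma function. -/
/-!
Enlarging the domain to `(0, ∞)` only increases the integral of the positive integrand, and the
substitution `t = b u ^ p` evaluates
`∫₀^∞ u ^ q exp (-b u ^ p) du = b ^ (-(q + 1) / p) Γ((q + 1) / p) / p`.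
With `p = (β + 1) / β` and `b = n (2R) ^ (-1/β) / p` this is the stated constant.
-/

open MeasureTheory Real Set

theorem setIntegral_Icc_rpow_mul_exp_neg_mul_rpow_le {p q b : ℝ} (hp : 0 < p) (hq : -1 < q)
    (hb : 0 < b) (c : ℝ) :
    ∫ x in Icc 0 c, x ^ q * exp (-b * x ^ p) ≤
      b ^ (-(q + 1) / p) * (1 / p) * Gamma ((q + 1) / p) := by
  rw [← integral_rpow_mul_exp_neg_mul_rpow hp hq hb, setIntegral_congr_set Ioc_ae_eq_Icc.symm]
  refine setIntegral_mono_set (integrableOn_rpow_mul_exp_neg_mul_rpow hq hp hb) ?_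
    Ioc_subset_Ioi_self.eventuallyLE
  filter_upwards [self_mem_ae_restrict measurableSet_Ioi] with x (hx : 0 < x)
  positivity

theorem mul_div_rpow_neg_mul_one_div {A c n : ℝ} (hA : 0 < A) (hc : 0 ≤ c) (hn : 0 ≤ n)
    (s : ℝ) :
    (n * c / A) ^ (-s) * (1 / A) = A ^ (s - 1) * c ^ (-s) * n ^ (-s) := by
  rw [div_rpow (by positivity) hA.le, mul_rpow hn hc, rpow_sub hA, rpow_neg hA.le, rpow_one]
  field_simp

theorem integral_rpow_exp_bound_general (β R q n : ℝ) (hβ0 : 0 < β)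
    (hR : 0 < R) (hq : 0 ≤ q) (hn : 0 < n) :
    ∫ u in Set.Icc (0:ℝ) (2 * R),
        u ^ q * Real.exp (-(n * β * (2 * R) ^ (-(1 / β)) * u ^ ((β + 1) / β) / (β + 1))) ≤
      ((β + 1) / β) ^ ((β * q - 1) / (β + 1)) * (2 * R) ^ ((q + 1) / (β + 1)) *
        Real.Gamma (β * (q + 1) / (β + 1)) * n ^ (-(β * (q + 1)) / (β + 1)) := by
  set p := (β + 1) / β
  set c := (2 * R) ^ (-(1 / β))
  have hp : 0 < p := by positivity
  have hc : 0 < c := by positivity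
  have hpβ : p * β = β + 1 := div_mul_cancel₀ _ hβ0.ne'
  have hs : (q + 1) / p = β * (q + 1) / (β + 1) := by rw [div_div_eq_mul_div]; ring
  calc ∫ u in Icc 0 (2 * R), u ^ q * exp (-(n * β * c * u ^ p / (β + 1)))
      = ∫ u in Icc 0 (2 * R), u ^ q * exp (-(n * c / p) * u ^ p) := by
        congr! 4 with u; field_simp; linear_combination (-u ^ p) * hpβ
    _ ≤ (n * c / p) ^ (-(q + 1) / p) * (1 / p) * Gamma ((q + 1) / p) :=
        setIntegral_Icc_rpow_mul_exp_neg_mul_rpow_le hp (by linarith) (by positivity) _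
    _ = _ := by
        rw [neg_div, mul_div_rpow_neg_mul_one_div hp hc.le hn.le, ← rpow_mul (by positivity), hs]
        have hsp : β * (q + 1) / (β + 1) - 1 = (β * q - 1) / (β + 1) := by field_simp; ring
        have hsc : -(1 / β) * -(β * (q + 1) / (β + 1)) = (q + 1) / (β + 1) := by field_simp
        rw [hsp, hsc, neg_div]
        ring

/-- Bound for ∫_0^{2R} u^q exp(−nβ(2R)^{-1/β}u^{(β+1)/β}/(β+1)) du. -/
theorem integral_rpow_exp_bound (β R q n : ℝ) (hβ0 : 0 < β) (hβ1 : β ≤ 1)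
    (hR : 0 < R) (hq : 0 ≤ q) (hn : 0 < n) :
    ∫ u in Set.Icc (0:ℝ) (2 * R),
        u ^ q * Real.exp (-(n * β * (2 * R) ^ (-(1 / β)) * u ^ ((β + 1) / β) / (β + 1))) ≤
      ((β + 1) / β) ^ ((β * q - 1) / (β + 1)) * (2 * R) ^ ((q + 1) / (β + 1)) *
        Real.Gamma (β * (q + 1) / (β + 1)) * n ^ (-(β * (q + 1)) / (β + 1)) :=
  integral_rpow_exp_bound_general β R q n hβ0 hR hq hn
end

section
/- Let β ∈ (0,1] and let p ≥ 1 be a real number. There exists a constant C > 0, depending only on β and p, such that for every R > 0 and every real n ≥ 1, one has ∫_{2R}^∞ u^{2p−2} · exp(−n(u − 2R/(β+1))) du ≤ C · n^{−2p+1} · exp(−βRn/(β+1)). -/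
/-!
For `u ≥ 2R` one has `n (u - 2R/(β+1)) ≥ βRn/(β+1) + c n u` with `c = β/(2(β+1))`, so the
integrand is at most `exp(-βRn/(β+1)) · u^(2p-2) exp(-c n u)`. Extending the integral of the
last factor to `(0, ∞)` gives the Gamma integral `Γ(2p-1) (c n)^(1-2p)`.
-/

open MeasureTheory Real Set

lemma integrableOn_rpow_mul_exp_neg_mul_Ioi {s r : ℝ} (hs : -1 < s) (hr : 0 < r) :
    IntegrableOn (fun t : ℝ ↦ t ^ s * exp (-(r * t))) (Ioi 0) :=
  .of_integral_ne_zero <| by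
    rw [← add_sub_cancel_right s 1, integral_rpow_mul_exp_neg_mul_Ioi (by linarith) hr]
    have := Gamma_pos_of_pos (show 0 < s + 1 by linarith)
    positivity

lemma setIntegral_Ioi_rpow_mul_exp_neg_mul_le {s r c : ℝ} (hc : 0 ≤ c) (hs : -1 < s)
    (hr : 0 < r) :
    ∫ t in Ioi c, t ^ s * exp (-(r * t)) ≤ (1 / r) ^ (s + 1) * Gamma (s + 1) := by
  rw [← integral_rpow_mul_exp_neg_mul_Ioi (by linarith) hr, add_sub_cancel_right]
  refine setIntegral_mono_set (integrableOn_rpow_mul_exp_neg_mul_Ioi hs hr) ?_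
    (Ioi_subset_Ioi hc).eventuallyLE
  filter_upwards [self_mem_ae_restrict measurableSet_Ioi] with t (ht : 0 < t)
  positivity

lemma exp_neg_mul_sub_le {β R n u : ℝ} (hβ : 0 < β) (hn : 0 ≤ n) (hu : 2 * R ≤ u) :
    exp (-(n * (u - 2 * R / (β + 1)))) ≤
      exp (-(β * R * n / (β + 1))) * exp (-(β / (2 * (β + 1)) * n * u)) := by
  rw [← exp_add, exp_le_exp]
  have hβ1 : 0 < β + 1 := by linarith
  have key : 0 ≤ n * (β + 2) * (u - 2 * R) / (2 * (β + 1)) := by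
    apply div_nonneg <;> [apply mul_nonneg (by positivity); positivity]; linarith
  calc -(n * (u - 2 * R / (β + 1)))
      = -(β * R * n / (β + 1)) + -(β / (2 * (β + 1)) * n * u)
        - n * (β + 2) * (u - 2 * R) / (2 * (β + 1)) := by field_simp; ring
    _ ≤ _ := by linarith

lemma setIntegral_Ioi_rpow_mul_exp_neg_mul_sub_le {β R n s : ℝ} (hβ : 0 < β) (hR : 0 ≤ R)
    (hn : 0 < n) (hs : -1 < s) :
    ∫ u in Ioi (2 * R), u ^ s * exp (-(n * (u - 2 * R / (β + 1)))) ≤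
      exp (-(β * R * n / (β + 1))) *
        ((1 / (β / (2 * (β + 1)) * n)) ^ (s + 1) * Gamma (s + 1)) := by
  set c := β / (2 * (β + 1))
  set E := exp (-(β * R * n / (β + 1)))
  have hcn : 0 < c * n := by positivity
  calc ∫ u in Ioi (2 * R), u ^ s * exp (-(n * (u - 2 * R / (β + 1))))
      ≤ ∫ u in Ioi (2 * R), E * (u ^ s * exp (-(c * n * u))) := by
        refine integral_mono_of_nonneg ?_ ?_ ?_
        · filter_upwards [self_mem_ae_restrict measurableSet_Ioi] with u (hu : 2 * R < u)
          have : 0 < u := by linarith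
          positivity
        · exact ((integrableOn_rpow_mul_exp_neg_mul_Ioi hs hcn).mono_set
            (Ioi_subset_Ioi (by positivity))).const_mul E
        · filter_upwards [self_mem_ae_restrict measurableSet_Ioi] with u (hu : 2 * R < u)
          have : 0 < u := by linarith
          calc u ^ s * exp (-(n * (u - 2 * R / (β + 1))))
              ≤ u ^ s * (E * exp (-(c * n * u))) := by
                gcongr; exact exp_neg_mul_sub_le hβ hn.le hu.le
            _ = _ := by ring
    _ = E * ∫ u in Ioi (2 * R), u ^ s * exp (-(c * n * u)) := integral_const_mul _ _
    _ ≤ E * ((1 / (c * n)) ^ (s + 1) * Gamma (s + 1)) := by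
        gcongr
        exact setIntegral_Ioi_rpow_mul_exp_neg_mul_le (by positivity) hs hcn

theorem tail_integral_bound_general (β p : ℝ) (hβ0 : 0 < β) (hp : 1 ≤ p) :
    ∃ C : ℝ, 0 < C ∧ ∀ R : ℝ, 0 < R → ∀ n : ℝ, 1 ≤ n →
      ∫ u in Set.Ioi (2 * R), u ^ (2 * p - 2) * Real.exp (-(n * (u - 2 * R / (β + 1)))) ≤
        C * n ^ (-(2 * p) + 1) * Real.exp (-(β * R * n / (β + 1))) := by
  set c := β / (2 * (β + 1))
  have hc : 0 < c := by positivity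
  have hΓ : 0 < Gamma (2 * p - 2 + 1) := Gamma_pos_of_pos (by linarith)
  refine ⟨(1 / c) ^ (2 * p - 2 + 1) * Gamma (2 * p - 2 + 1), by positivity, fun R hR n hn ↦ ?_⟩
  have hn0 : 0 < n := by linarith
  refine (setIntegral_Ioi_rpow_mul_exp_neg_mul_sub_le hβ0 hR.le hn0 (by linarith)).trans_eq ?_
  rw [show -(2 * p) + 1 = -(2 * p - 2 + 1) by ring, rpow_neg hn0.le, one_div (c * n), one_div c,
    mul_inv, mul_rpow (inv_nonneg.mpr hc.le) (inv_nonneg.mpr hn0.le), inv_rpow hn0.le]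
  ring

/-- Bound on the tail integral ∫_{2R}^∞ u^{2p−2} exp(−n(u − 2R/(β+1))) du. -/
theorem tail_integral_bound (β p : ℝ) (hβ0 : 0 < β) (hβ1 : β ≤ 1) (hp : 1 ≤ p) :
    ∃ C : ℝ, 0 < C ∧ ∀ R : ℝ, 0 < R → ∀ n : ℝ, 1 ≤ n →
      ∫ u in Set.Ioi (2 * R), u ^ (2 * p - 2) * Real.exp (-(n * (u - 2 * R / (β + 1)))) ≤
        C * n ^ (-(2 * p) + 1) * Real.exp (-(β * R * n / (β + 1))) :=
  tail_integral_bound_general β p hβ0 hp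
end

section
/- Let K : ℝ → ℝ be the triangular kernel K(u) = 4·min(u, 1−u) for u ∈ [0,1] and K(u) = 0 otherwise. Let β ∈ (0,1], h > 0 and x_0 ∈ ℝ, and define f : ℝ → ℝ by f(x) = h^β · K((x − x_0)/h). Then |f(x) − f(y)| ≤ 4|x − y|^β for all x, y ∈ ℝ. -/
/-!
The kernel is `4`-Lipschitz and takes values in `[0, 2]`, so the oscillation `|K u - K v|` is at
most `4 * min 1 |u - v| ≤ 4 * |u - v| ^ β`. The factor `h ^ β` exactly compensates the rescaling
`u = (x - x₀) / h`, since `h ^ β * (|x - y| / h) ^ β = |x - y| ^ β`.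
-/

/-- The triangular kernel K(u) = 4(u ∧ (1−u))·1_{[0,1]}(u). -/
noncomputable def triKernel (u : ℝ) : ℝ :=
  if u ∈ Set.Icc (0:ℝ) 1 then 4 * min u (1 - u) else 0

namespace Real

theorem min_one_le_rpow {t β : ℝ} (ht : 0 ≤ t) (hβ0 : 0 ≤ β) (hβ1 : β ≤ 1) :
    min 1 t ≤ t ^ β := by
  rcases le_total t 1 with ht1 | ht1
  · exact (min_le_right _ _).trans (self_le_rpow_of_le_one ht ht1 hβ1)
  · exact (min_le_left _ _).trans (one_le_rpow ht1 hβ0)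

theorem abs_sub_le_mul_rpow_of_lipschitz_of_bounded {g : ℝ → ℝ} {L β : ℝ}
    (hβ0 : 0 ≤ β) (hβ1 : β ≤ 1) (hlip : ∀ u v, |g u - g v| ≤ L * |u - v|)
    (hosc : ∀ u v, |g u - g v| ≤ L) (u v : ℝ) :
    |g u - g v| ≤ L * |u - v| ^ β := by
  have hL : 0 ≤ L := (abs_nonneg _).trans (hosc u u)
  calc |g u - g v| ≤ L * min 1 |u - v| := by
        rw [mul_min_of_nonneg _ _ hL, mul_one]
        exact le_min (hosc u v) (hlip u v)
    _ ≤ L * |u - v| ^ β := by gcongr; exact min_one_le_rpow (abs_nonneg _) hβ0 hβ1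

theorem abs_sub_rescale_le {g : ℝ → ℝ} {C β h : ℝ} (hh : 0 < h)
    (hg : ∀ u v, |g u - g v| ≤ C * |u - v| ^ β) (x₀ x y : ℝ) :
    |h ^ β * g ((x - x₀) / h) - h ^ β * g ((y - x₀) / h)| ≤ C * |x - y| ^ β := by
  have hscale : |(x - x₀) / h - (y - x₀) / h| = |x - y| / h := by
    rw [div_sub_div_same, sub_sub_sub_cancel_right, abs_div, abs_of_pos hh]
  calc |h ^ β * g ((x - x₀) / h) - h ^ β * g ((y - x₀) / h)|
      = h ^ β * |g ((x - x₀) / h) - g ((y - x₀) / h)| := by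
        rw [← mul_sub, abs_mul, abs_of_pos (rpow_pos_of_pos hh β)]
    _ ≤ h ^ β * (C * (|x - y| / h) ^ β) := by
        gcongr
        simpa only [hscale] using hg ((x - x₀) / h) ((y - x₀) / h)
    _ = C * |x - y| ^ β := by
        rw [mul_left_comm, ← mul_rpow hh.le (by positivity), mul_div_cancel₀ _ hh.ne']

end Real

theorem triKernel_eq_max_min (u : ℝ) : triKernel u = 4 * max 0 (min u (1 - u)) := by
  unfold triKernel
  by_cases hu : u ∈ Set.Icc (0:ℝ) 1
  · rw [if_pos hu, max_eq_right (le_min hu.1 (by linarith [hu.2]))]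
  · rw [if_neg hu, max_eq_left, mul_zero]
    rw [Set.mem_Icc, not_and_or, not_le, not_le] at hu
    rcases hu with hu | hu
    · exact (min_le_left _ _).trans hu.le
    · exact (min_le_right _ _).trans (by linarith)

theorem triKernel_nonneg (u : ℝ) : 0 ≤ triKernel u := by
  rw [triKernel_eq_max_min]; positivity

theorem triKernel_le_two (u : ℝ) : triKernel u ≤ 2 := by
  rw [triKernel_eq_max_min]
  have : min u (1 - u) ≤ 1 / 2 := by
    rcases le_total u (1 / 2) with hu | hu
    · exact (min_le_left _ _).trans hu
    · exact (min_le_right _ _).trans (by linarith)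
  have : max 0 (min u (1 - u)) ≤ 1 / 2 := max_le (by norm_num) this
  linarith

theorem abs_triKernel_sub_le (u v : ℝ) : |triKernel u - triKernel v| ≤ 4 * |u - v| := by
  rw [triKernel_eq_max_min, triKernel_eq_max_min, ← mul_sub, abs_mul, abs_of_pos four_pos]
  refine mul_le_mul_of_nonneg_left ?_ four_pos.le
  calc |max 0 (min u (1 - u)) - max 0 (min v (1 - v))|
      ≤ max |0 - 0| |min u (1 - u) - min v (1 - v)| := abs_max_sub_max_le_max _ _ _ _
    _ ≤ max |0 - 0| (max |u - v| |(1 - u) - (1 - v)|) := by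
        gcongr; exact abs_min_sub_min_le_max _ _ _ _
    _ = |u - v| := by
        rw [sub_self, abs_zero, sub_sub_sub_cancel_left, abs_sub_comm, max_self,
          max_eq_right (abs_nonneg _)]

theorem abs_triKernel_sub_le_four (u v : ℝ) : |triKernel u - triKernel v| ≤ 4 :=
  (abs_sub_le_of_nonneg_of_le (triKernel_nonneg u) (triKernel_le_two u)
    (triKernel_nonneg v) (triKernel_le_two v)).trans (by norm_num)

/-- The rescaled triangular bump x ↦ h^β K((x−x₀)/h) is β-Hölder with constant 4. -/
theorem triangular_bump_holder (β h x₀ : ℝ) (hβ0 : 0 < β) (hβ1 : β ≤ 1) (hh : 0 < h) :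
    ∀ x y : ℝ,
      |h ^ β * triKernel ((x - x₀) / h) - h ^ β * triKernel ((y - x₀) / h)| ≤
        4 * |x - y| ^ β :=
  Real.abs_sub_rescale_le hh
    (Real.abs_sub_le_mul_rpow_of_lipschitz_of_bounded hβ0.le hβ1 abs_triKernel_sub_le
      abs_triKernel_sub_le_four) x₀
end

section
/- Let K be the triangular kernel K(u) = 4·min(u, 1−u) for u ∈ [0,1] and K(u) = 0 otherwise. Let m ≥ 1 be an integer, h = 1/m, let c > 0, R > 0, β ∈ (0,1], let a > 0, let p ≥ 1 be an integer, and let θ = (θ_1, …, θ_m) ∈ {0,1}^m. Define g_θ : [0,1] → ℝ by g_θ(x) = Σ_{k=1}^m θ_k · cR h^β K((x − (k−1)h)/h). Then ∫_0^1 (a + g_θ(x))^p dx − a^p = (Σ_{k=1}^m θ_k) · Σ_{j=1}^p binom(p, j) · a^{p−j} · (cR)^j · h^{βj+1} · 2^j/(j+1). -/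
/-!
The bumps `θ k * K((x - k h)/h)` live on the disjoint cells `[k h, (k + 1) h]`, so after splitting
`[0, 1]` into these cells and rescaling each to `[0, 1]`, cell `k` contributes
`h * ∫₀¹ (a + θ_k s K)^p` with `s = c R h^β`. As `θ_k ∈ {0, 1}`, this is `h a^p` plus `θ_k` times
`h (∫₀¹ (a + s K)^p - a^p)`, and the binomial theorem together with `∫₀¹ K^j = 2^j/(j+1)` evaluates
the latter.
-/

open MeasureTheory

open Set

lemma min_one_sub_nonpos_of_notMem_Ioo {u : ℝ} (hu : u ∉ Ioo 0 1) : min u (1 - u) ≤ 0 := by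
  rw [mem_Ioo, not_and_or, not_lt, not_lt] at hu
  rcases hu with hu | hu
  · exact min_le_of_left_le hu
  · exact min_le_of_right_le (by linarith)

lemma triKernel_eq_max (u : ℝ) : triKernel u = 4 * max (min u (1 - u)) 0 := by
  unfold triKernel
  split_ifs with hu
  · rw [max_eq_left (le_min hu.1 (by linarith [hu.2]))]
  · rw [max_eq_right (min_one_sub_nonpos_of_notMem_Ioo fun h => hu (Ioo_subset_Icc_self h)), mul_zero]

lemma continuous_triKernel : Continuous triKernel := by
  simp only [funext triKernel_eq_max]
  fun_prop

lemma support_triKernel_subset : Function.support triKernel ⊆ Ioo 0 1 := by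
  intro u hu
  by_contra hmem
  rw [Function.mem_support, triKernel_eq_max, max_eq_right (min_one_sub_nonpos_of_notMem_Ioo hmem),
    mul_zero] at hu
  exact hu rfl

lemma triKernel_one_sub (u : ℝ) : triKernel (1 - u) = triKernel u := by
  simp only [triKernel_eq_max, sub_sub_cancel, min_comm]

lemma triKernel_of_mem_Icc {u : ℝ} (hu : u ∈ Icc (0:ℝ) (1/2)) : triKernel u = 4 * u := by
  rw [triKernel_eq_max, min_eq_left (by linarith [hu.2]), max_eq_left hu.1]

lemma integral_triKernel_pow (j : ℕ) : ∫ u in (0:ℝ)..1, triKernel u ^ j = 2 ^ j / (j + 1) := by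
  have hint (a b : ℝ) : IntervalIntegrable (fun u => triKernel u ^ j) volume a b :=
    (continuous_triKernel.pow j).intervalIntegrable a b
  have left_half : ∫ u in (0:ℝ)..1/2, triKernel u ^ j = 4 ^ j * (1/2) ^ (j + 1) / (j + 1) := by
    rw [intervalIntegral.integral_congr (g := fun u => 4 ^ j * u ^ j) fun u hu => by
      rw [uIcc_of_le (by norm_num)] at hu
      simp only [triKernel_of_mem_Icc hu, mul_pow]]
    rw [intervalIntegral.integral_const_mul, integral_pow]
    ring
  have right_half : ∫ u in (1/2:ℝ)..1, triKernel u ^ j = ∫ u in (0:ℝ)..1/2, triKernel u ^ j := by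
    calc ∫ u in (1/2:ℝ)..1, triKernel u ^ j = ∫ u in (1/2:ℝ)..1, triKernel (1 - u) ^ j := by
          simp only [triKernel_one_sub]
      _ = _ := by rw [intervalIntegral.integral_comp_sub_left (fun u => triKernel u ^ j)]; norm_num
  rw [← intervalIntegral.integral_add_adjacent_intervals (hint 0 (1/2)) (hint (1/2) 1),
    right_half, left_half]
  have h4 : (4:ℝ) ^ j * (1/2) ^ (j + 1) = 2 ^ j / 2 := by
    rw [show (4:ℝ) = 2 * 2 by norm_num, mul_pow, div_pow, one_pow, pow_succ]
    field_simp
  rw [h4]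
  ring

lemma sum_bumps_eq_of_mem_Icc {m : ℕ} {h : ℝ} (hh : 0 < h) (f : Fin m → ℝ → ℝ)
    (hf : ∀ k, Function.support (f k) ⊆ Ioo 0 1) (i : Fin m) {x : ℝ}
    (hx : x ∈ Icc ((i : ℕ) * h) (((i : ℕ) + 1) * h)) :
    ∑ k : Fin m, f k ((x - (k : ℕ) * h) / h) = f i ((x - (i : ℕ) * h) / h) := by
  refine Fintype.sum_eq_single i fun k hk => Function.notMem_support.mp fun hmem => ?_
  obtain ⟨hpos, hlt⟩ := hf k hmem
  rw [lt_div_iff₀ hh] at hpos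
  rw [div_lt_iff₀ hh] at hlt
  have hki : (k : ℕ) ≠ (i : ℕ) := Fin.val_ne_of_ne hk
  rcases Nat.lt_or_gt_of_ne hki with hki | hki
  · have : ((k : ℕ) : ℝ) + 1 ≤ (i : ℕ) := by exact_mod_cast hki
    nlinarith [hx.1]
  · have : ((i : ℕ) : ℝ) + 1 ≤ (k : ℕ) := by exact_mod_cast hki
    nlinarith [hx.2]

lemma integral_comp_sub_mul_div_eq (g : ℝ → ℝ) {h : ℝ} (hh : h ≠ 0) (k : ℝ) :
    ∫ x in k * h..(k + 1) * h, g ((x - k * h) / h) = h * ∫ u in (0:ℝ)..1, g u := by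
  simp only [sub_div, mul_div_cancel_right₀ _ hh]
  rw [intervalIntegral.integral_comp_div_sub g hh, smul_eq_mul]
  simp only [mul_div_cancel_right₀ _ hh]
  norm_num

lemma integral_comp_sum_bumps {m : ℕ} {h : ℝ} (hh : 0 < h) (F : ℝ → ℝ) (hF : Continuous F)
    (f : Fin m → ℝ → ℝ) (hfc : ∀ k, Continuous (f k)) (hf : ∀ k, Function.support (f k) ⊆ Ioo 0 1) :
    ∫ x in (0:ℝ)..m * h, F (∑ k : Fin m, f k ((x - (k : ℕ) * h) / h)) =
      h * ∑ k : Fin m, ∫ u in (0:ℝ)..1, F (f k u) := by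
  set G := fun x => F (∑ k : Fin m, f k ((x - (k : ℕ) * h) / h))
  have hG : Continuous G := by fun_prop
  have hcells := intervalIntegral.sum_integral_adjacent_intervals (f := G) (μ := volume)
    (a := fun i : ℕ => i * h) (n := m) fun i _ => hG.intervalIntegrable _ _
  simp only [Nat.cast_zero, zero_mul, Nat.cast_add, Nat.cast_one] at hcells
  rw [← hcells, ← Fin.sum_univ_eq_sum_range (fun i => ∫ x in i * h..(i + 1) * h, G x), Finset.mul_sum]
  refine Finset.sum_congr rfl fun i _ => ?_
  rw [← integral_comp_sub_mul_div_eq (fun u => F (f i u)) hh.ne']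
  refine intervalIntegral.integral_congr fun x hx => ?_
  rw [uIcc_of_le (by gcongr; linarith)] at hx
  simp only [G, sum_bumps_eq_of_mem_Icc hh f hf i hx]

lemma integral_add_mul_triKernel_pow_sub (a t : ℝ) (p : ℕ) :
    (∫ u in (0:ℝ)..1, (a + t * triKernel u) ^ p) - a ^ p =
      ∑ j ∈ Finset.Icc 1 p, (p.choose j : ℝ) * a ^ (p - j) * t ^ j * (2 ^ j / (j + 1)) := by
  have hexpand (u : ℝ) : (a + t * triKernel u) ^ p =
      ∑ j ∈ Finset.range (p + 1), (p.choose j * a ^ (p - j) * t ^ j) * triKernel u ^ j := by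
    rw [add_comm, add_pow]
    exact Finset.sum_congr rfl fun j _ => by ring
  simp only [hexpand]
  rw [intervalIntegral.integral_finsetSum
      (f := fun j u => (p.choose j * a ^ (p - j) * t ^ j : ℝ) * triKernel u ^ j) fun j _ =>
      (continuous_const.mul (continuous_triKernel.pow j)).intervalIntegrable 0 1,
    Finset.sum_range_eq_add_Ico _ (by omega : 0 < p + 1), Finset.Ico_add_one_right_eq_Icc]
  simp only [intervalIntegral.integral_const_mul, integral_triKernel_pow]
  norm_num

theorem integral_shift_gtheta_pow_general (m : ℕ) (hm : 1 ≤ m) (c R β a : ℝ) (p : ℕ)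
    (θ : Fin m → ℝ) (hθ : ∀ k, θ k = 0 ∨ θ k = 1) :
    (∫ x in Set.Icc (0:ℝ) 1,
        (a + ∑ k : Fin m, θ k * (c * R * ((1:ℝ)/m) ^ β *
          triKernel ((x - (k : ℕ) * ((1:ℝ)/m)) / ((1:ℝ)/m)))) ^ (p : ℕ)) - a ^ (p : ℕ) =
      (∑ k : Fin m, θ k) *
        ∑ j ∈ Finset.Icc 1 p, (p.choose j : ℝ) * a ^ (p - j) * (c * R) ^ j *
          ((1:ℝ)/m) ^ (β * j + 1) * ((2:ℝ) ^ j / (j + 1)) := by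
  have hm0 : (0 : ℝ) < m := by exact_mod_cast hm
  set h : ℝ := 1 / m
  have hh : 0 < h := one_div_pos.mpr hm0
  have hmh : (m : ℝ) * h = 1 := mul_one_div_cancel hm0.ne'
  set s := c * R * h ^ β
  set Φ : ℝ → ℝ := fun t => (∫ u in (0:ℝ)..1, (a + t * triKernel u) ^ p) - a ^ p
  have hcell (k : Fin m) :
      ∫ u in (0:ℝ)..1, (a + θ k * (s * triKernel u)) ^ p = a ^ p + θ k * Φ s := by
    rcases hθ k with hk | hk <;> simp [hk, Φ]
  have hΦ : h * Φ s = ∑ j ∈ Finset.Icc 1 p, (p.choose j : ℝ) * a ^ (p - j) * (c * R) ^ j *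
      h ^ (β * j + 1) * ((2:ℝ) ^ j / (j + 1)) := by
    rw [show Φ s = _ from integral_add_mul_triKernel_pow_sub a s p, Finset.mul_sum]
    refine Finset.sum_congr rfl fun j _ => ?_
    rw [Real.rpow_add hh, Real.rpow_one, Real.rpow_mul hh.le, Real.rpow_natCast]
    ring
  have hbumps := integral_comp_sum_bumps hh (fun y => (a + y) ^ p) (by fun_prop)
    (fun k u => θ k * (s * triKernel u))
    (fun k => continuous_const.mul (continuous_const.mul continuous_triKernel))
    (fun k => (Function.support_mul_subset_right _ _).trans
      ((Function.support_mul_subset_right _ _).trans support_triKernel_subset))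
  rw [hmh] at hbumps
  rw [integral_Icc_eq_integral_Ioc, ← intervalIntegral.integral_of_le zero_le_one, hbumps]
  simp only [hcell, Finset.sum_add_distrib, Finset.sum_const, Finset.card_univ, Fintype.card_fin,
    nsmul_eq_mul, ← Finset.sum_mul]
  linear_combination a ^ p * hmh + (∑ k, θ k) * hΦ

/-- Binomial expansion of ∫_0^1 (a + g_θ(x))^p dx − a^p for the prior functions g_θ. -/
theorem integral_shift_gtheta_pow (m : ℕ) (hm : 1 ≤ m) (c R β a : ℝ) (p : ℕ)
    (hc : 0 < c) (hR : 0 < R) (hβ0 : 0 < β) (hβ1 : β ≤ 1) (ha : 0 < a) (hp : 1 ≤ p)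
    (θ : Fin m → ℝ) (hθ : ∀ k, θ k = 0 ∨ θ k = 1) :
    (∫ x in Set.Icc (0:ℝ) 1,
        (a + ∑ k : Fin m, θ k * (c * R * ((1:ℝ)/m) ^ β *
          triKernel ((x - (k : ℕ) * ((1:ℝ)/m)) / ((1:ℝ)/m)))) ^ (p : ℕ)) - a ^ (p : ℕ) =
      (∑ k : Fin m, θ k) *
        ∑ j ∈ Finset.Icc 1 p, (p.choose j : ℝ) * a ^ (p - j) * (c * R) ^ j *
          ((1:ℝ)/m) ^ (β * j + 1) * ((2:ℝ) ^ j / (j + 1)) :=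
  integral_shift_gtheta_pow_general m hm c R β a p θ hθ
end

section
/- Let m ≥ 1 be an integer and let a_1, …, a_m be nonnegative reals, not all zero. Write ‖a‖_r = (Σ_{k=1}^m a_k^r)^{1/r} for r ∈ {1, 2, 3}. Let θ_1, …, θ_m be independent random variables on a probability space, each taking values in {0,1}, with P(θ_k = 1) = a_k/‖a‖_2 for every k (note a_k/‖a‖_2 ∈ [0,1]). Then P(Σ_{k=1}^m a_k θ_k < ‖a‖_2/2) ≤ 4 · (‖a‖_3/‖a‖_2)^3. -/
/-!
Chebyshev's inequality. The sum `S = ∑ aₖ θₖ` has mean `∑ aₖ²/‖a‖₂ = ‖a‖₂`, and since a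
`[0,1]`-valued variable has variance at most its mean, independence gives
`Var S ≤ ∑ aₖ² · aₖ/‖a‖₂ = ‖a‖₃³/‖a‖₂`. The event `S < ‖a‖₂/2` is a deviation of at least
`‖a‖₂/2` below the mean, so its probability is at most `4 ‖a‖₃³/‖a‖₂³`.
-/

open MeasureTheory ProbabilityTheory

namespace ProbabilityTheory

variable {Ω : Type*} [MeasurableSpace Ω] {P : Measure Ω}

lemma integral_eq_measureReal_of_zero_or_one {X : Ω → ℝ} (hX : Measurable X)
    (hval : ∀ ω, X ω = 0 ∨ X ω = 1) : P[X] = P.real {ω | X ω = 1} := by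
  have hX_eq : X = {ω | X ω = 1}.indicator 1 := by
    ext ω
    rcases hval ω with h | h <;> simp [Set.indicator, h]
  conv_lhs => rw [hX_eq]
  exact integral_indicator_one (hX (measurableSet_singleton 1))

lemma integral_sum_mul {ι : Type*} [Fintype ι] {X : ι → Ω → ℝ} (hX : ∀ i, Integrable (X i) P)
    (c : ι → ℝ) : P[fun ω ↦ ∑ i, c i * X i ω] = ∑ i, c i * P[X i] := by
  rw [integral_finsetSum _ fun i _ ↦ (hX i).const_mul (c i)]
  simp only [integral_const_mul]

variable [IsProbabilityMeasure P]

lemma variance_le_integral_of_mem_Icc_zero_one {X : Ω → ℝ} (hX : AEMeasurable X P)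
    (h : ∀ᵐ ω ∂P, X ω ∈ Set.Icc 0 1) : Var[X; P] ≤ P[X] := by
  have hmean : 0 ≤ P[X] := integral_nonneg_of_ae (h.mono fun _ hω ↦ hω.1)
  calc Var[X; P] ≤ (1 - P[X]) * (P[X] - 0) := variance_le_sub_mul_sub h hX
    _ ≤ P[X] := by nlinarith

lemma variance_sum_mul_le_of_mem_Icc_zero_one {ι : Type*} [Fintype ι] {X : ι → Ω → ℝ}
    (hX : ∀ i, AEMeasurable (X i) P) (hind : iIndepFun X P)
    (h : ∀ i, ∀ᵐ ω ∂P, X i ω ∈ Set.Icc 0 1) (c : ι → ℝ) :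
    Var[fun ω ↦ ∑ i, c i * X i ω; P] ≤ ∑ i, c i ^ 2 * P[X i] := by
  have hmemLp i : MemLp (fun ω ↦ c i * X i ω) 2 P :=
    (memLp_of_bounded (h i) (hX i).aestronglyMeasurable 2).const_mul (c i)
  have hpair : Set.Pairwise ↑(Finset.univ : Finset ι)
      fun i j ↦ (fun ω ↦ c i * X i ω) ⟂ᵢ[P] (fun ω ↦ c j * X j ω) := fun i _ j _ hij ↦
    (hind.indepFun hij).comp (measurable_const_mul (c i)) (measurable_const_mul (c j))
  have hsum : (fun ω ↦ ∑ i, c i * X i ω) = ∑ i, fun ω ↦ c i * X i ω := by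
    ext ω
    simp
  rw [hsum, IndepFun.variance_sum (fun i _ ↦ hmemLp i) hpair]
  gcongr with i
  rw [variance_const_mul]
  gcongr
  exact variance_le_integral_of_mem_Icc_zero_one (hX i) (h i)

lemma meas_le_sub_le_variance_div_sq {X : Ω → ℝ} (hX : MemLp X 2 P) {t : ℝ} (ht : 0 < t) :
    P {ω | X ω ≤ P[X] - t} ≤ ENNReal.ofReal (Var[X; P] / t ^ 2) := by
  refine (measure_mono fun ω (hω : X ω ≤ P[X] - t) ↦ ?_).trans
    (meas_ge_le_variance_div_sq hX ht)
  show t ≤ |X ω - P[X]|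
  rw [abs_sub_comm]
  exact le_abs.2 (.inl (by linarith))

lemma meas_lt_half_integral_le {X : Ω → ℝ} (hX : MemLp X 2 P) (hmean : 0 < P[X]) :
    P {ω | X ω < P[X] / 2} ≤ ENNReal.ofReal (4 * Var[X; P] / P[X] ^ 2) := by
  refine (measure_mono fun ω (hω : X ω < P[X] / 2) ↦ ?_).trans
    ((meas_le_sub_le_variance_div_sq hX (half_pos hmean)).trans_eq ?_)
  · show X ω ≤ P[X] - P[X] / 2
    linarith
  · congr 1
    field_simp
    ring

end ProbabilityTheory

theorem weighted_bernoulli_deviation_general (m : ℕ) (a : Fin m → ℝ)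
    (ha : ∀ k, 0 ≤ a k) (ha' : ∃ k, a k ≠ 0)
    {Ω : Type*} [MeasurableSpace Ω] (P : Measure Ω) [IsProbabilityMeasure P]
    (θ : Fin m → Ω → ℝ) (hmeas : ∀ k, Measurable (θ k))
    (hind : iIndepFun θ P)
    (hval : ∀ k, ∀ ω, θ k ω = 0 ∨ θ k ω = 1)
    (hprob : ∀ k, P {ω | θ k ω = 1} =
      ENNReal.ofReal (a k / (∑ i, (a i) ^ 2) ^ ((1:ℝ)/2))) :
    P {ω | ∑ k, a k * θ k ω < (∑ i, (a i) ^ 2) ^ ((1:ℝ)/2) / 2} ≤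
      ENNReal.ofReal
        (4 * ((∑ i, (a i) ^ 3) ^ ((1:ℝ)/3) / (∑ i, (a i) ^ 2) ^ ((1:ℝ)/2)) ^ 3) := by
  set b := (∑ i, (a i) ^ 2) ^ ((1:ℝ)/2)
  set c := (∑ i, (a i) ^ 3) ^ ((1:ℝ)/3)
  obtain ⟨k₀, hk₀⟩ := ha'
  have hb : 0 < b := Real.rpow_pos_of_pos (Finset.sum_pos' (fun i _ ↦ sq_nonneg (a i))
    ⟨k₀, Finset.mem_univ _, pow_pos ((ha k₀).lt_of_ne' hk₀) 2⟩) _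
  have hb2 : b ^ 2 = ∑ i, (a i) ^ 2 := by
    convert Real.rpow_inv_natCast_pow (n := 2)
      (Finset.sum_nonneg fun i _ ↦ sq_nonneg (a i)) two_ne_zero using 3
    norm_num
  have hc3 : c ^ 3 = ∑ i, (a i) ^ 3 := by
    convert Real.rpow_inv_natCast_pow (n := 3)
      (Finset.sum_nonneg fun i _ ↦ pow_nonneg (ha i) 3) three_ne_zero using 3
    norm_num
  have hIcc k : ∀ᵐ ω ∂P, θ k ω ∈ Set.Icc 0 1 :=
    .of_forall fun ω ↦ by rcases hval k ω with h | h <;> simp [h]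
  have hθ k : MemLp (θ k) 2 P := memLp_of_bounded (hIcc k) (hmeas k).aestronglyMeasurable 2
  have hmean k : P[θ k] = a k / b := by
    rw [integral_eq_measureReal_of_zero_or_one (hmeas k) (hval k), measureReal_def, hprob k,
      ENNReal.toReal_ofReal (div_nonneg (ha k) hb.le)]
  have hES : P[fun ω ↦ ∑ k, a k * θ k ω] = b := by
    rw [integral_sum_mul (fun k ↦ (hθ k).integrable one_le_two)]
    simp only [hmean, ← mul_div_assoc, ← sq, ← Finset.sum_div, ← hb2]
    field_simp
  have hvar : Var[fun ω ↦ ∑ k, a k * θ k ω; P] ≤ (∑ i, (a i) ^ 3) / b := by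
    refine (variance_sum_mul_le_of_mem_Icc_zero_one (fun k ↦ (hmeas k).aemeasurable) hind
      hIcc a).trans_eq ?_
    rw [Finset.sum_div]
    exact Finset.sum_congr rfl fun k _ ↦ by rw [hmean]; ring
  have hS : MemLp (fun ω ↦ ∑ k, a k * θ k ω) 2 P :=
    memLp_finsetSum _ fun k _ ↦ (hθ k).const_mul (a k)
  have hbound := meas_lt_half_integral_le hS (hES ▸ hb)
  rw [hES] at hbound
  refine hbound.trans (ENNReal.ofReal_le_ofReal ?_)
  calc 4 * Var[fun ω ↦ ∑ k, a k * θ k ω; P] / b ^ 2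
      ≤ 4 * ((∑ i, (a i) ^ 3) / b) / b ^ 2 := by gcongr
    _ = 4 * (c / b) ^ 3 := by rw [div_pow c, hc3]; field_simp

/-- Deviation bound for a weighted sum of independent Bernoulli variables with
success probabilities a_k/‖a‖₂. -/
theorem weighted_bernoulli_deviation (m : ℕ) (hm : 1 ≤ m) (a : Fin m → ℝ)
    (ha : ∀ k, 0 ≤ a k) (ha' : ∃ k, a k ≠ 0)
    {Ω : Type*} [MeasurableSpace Ω] (P : Measure Ω) [IsProbabilityMeasure P]
    (θ : Fin m → Ω → ℝ) (hmeas : ∀ k, Measurable (θ k))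
    (hind : iIndepFun θ P)
    (hval : ∀ k, ∀ ω, θ k ω = 0 ∨ θ k ω = 1)
    (hprob : ∀ k, P {ω | θ k ω = 1} =
      ENNReal.ofReal (a k / (∑ i, (a i) ^ 2) ^ ((1:ℝ)/2))) :
    P {ω | ∑ k, a k * θ k ω < (∑ i, (a i) ^ 2) ^ ((1:ℝ)/2) / 2} ≤
      ENNReal.ofReal
        (4 * ((∑ i, (a i) ^ 3) ^ ((1:ℝ)/3) / (∑ i, (a i) ^ 2) ^ ((1:ℝ)/2)) ^ 3) :=
  weighted_bernoulli_deviation_general m a ha ha' P θ hmeas hind hval hprob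
end

section
/- Let (Ω, 𝔽, P) be a probability space, let p ≥ 1 be a real number, let t ≥ 0, and let X : Ω → [0,∞) be a random variable with E[(X − t^p)^2] < ∞. Then E[|X^{1/p} − t|] ≤ (E[(X − t^p)^2])^{1/(2p)} + 2t. -/
/-!
Pointwise, `|x ^ (1/p) - t| ≤ |x|^(1/p) + t ≤ (|x - t^p| + t^p)^(1/p) + t ≤ |x - t^p|^(1/p) + 2t`
by subadditivity of `y ↦ y ^ (1/p)`. Since `|y|^(1/p) = (y²)^(1/(2p))` and `y ↦ y^(1/(2p))` is
concave, Jensen's inequality bounds the expectation of the first term by `(E[(X - t^p)²])^(1/(2p))`.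
-/

open MeasureTheory

namespace Real

lemma abs_rpow_one_div_eq_sq_rpow (y p : ℝ) : |y| ^ (1 / p) = (y ^ 2) ^ (1 / (2 * p)) := by
  rw [← sq_abs, ← rpow_two, ← rpow_mul (abs_nonneg y)]
  congr 1
  field_simp

lemma abs_rpow_one_div_sub_le {p t : ℝ} (hp : 1 ≤ p) (ht : 0 ≤ t) (x : ℝ) :
    |x ^ (1 / p) - t| ≤ |x - t ^ p| ^ (1 / p) + 2 * t := by
  have hp0 : 0 < p := by linarith
  have hq0 : 0 ≤ 1 / p := by positivity
  have hq1 : 1 / p ≤ 1 := by rw [div_le_one hp0]; exact hp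
  have hroot : (t ^ p) ^ (1 / p) = t := by rw [one_div, rpow_rpow_inv ht hp0.ne']
  have hx : |x| ≤ |x - t ^ p| + t ^ p := by
    simpa [abs_of_nonneg (rpow_nonneg ht p)] using abs_add_le (x - t ^ p) (t ^ p)
  calc |x ^ (1 / p) - t| ≤ |x ^ (1 / p)| + t := by
        simpa [abs_of_nonneg ht] using abs_sub (x ^ (1 / p)) t
    _ ≤ |x| ^ (1 / p) + t := by gcongr; exact abs_rpow_le_abs_rpow x _
    _ ≤ (|x - t ^ p| + t ^ p) ^ (1 / p) + t := by gcongr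
    _ ≤ |x - t ^ p| ^ (1 / p) + (t ^ p) ^ (1 / p) + t := by
        gcongr; exact rpow_add_le_add_rpow (abs_nonneg _) (rpow_nonneg ht p) hq0 hq1
    _ = |x - t ^ p| ^ (1 / p) + 2 * t := by rw [hroot]; ring

end Real

namespace MeasureTheory

variable {α : Type*} [MeasurableSpace α] {μ : Measure α} {f : α → ℝ} {q : ℝ}

lemma Integrable.rpow_of_le_one [IsFiniteMeasure μ] (hf : Integrable f μ) (hf0 : 0 ≤ᵐ[μ] f)
    (hq0 : 0 ≤ q) (hq1 : q ≤ 1) : Integrable (fun x => f x ^ q) μ := by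
  refine Integrable.mono' ((integrable_const 1).add hf)
    ((Real.continuous_rpow_const hq0).comp_aestronglyMeasurable hf.1) ?_
  filter_upwards [hf0] with x (hx : 0 ≤ f x)
  have := rpow_one_add_le_one_add_mul_self (s := f x - 1) (by linarith) hq0 hq1
  rw [add_sub_cancel] at this
  rw [Real.norm_of_nonneg (Real.rpow_nonneg hx q), Pi.add_apply]
  nlinarith

lemma integral_rpow_le_rpow_integral [IsProbabilityMeasure μ] (hf : Integrable f μ)
    (hf0 : 0 ≤ᵐ[μ] f) (hq0 : 0 ≤ q) (hq1 : q ≤ 1) :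
    ∫ x, f x ^ q ∂μ ≤ (∫ x, f x ∂μ) ^ q :=
  (Real.concaveOn_rpow hq0 hq1).le_map_integral
    (Real.continuous_rpow_const hq0).continuousOn isClosed_Ici hf0 hf
    (hf.rpow_of_le_one hf0 hq0 hq1)

end MeasureTheory

theorem root_estimate_crude_general {Ω : Type*} [MeasurableSpace Ω] (P : Measure Ω)
    [IsProbabilityMeasure P] (p t : ℝ) (hp : 1 ≤ p) (ht : 0 ≤ t)
    (X : Ω → ℝ) (hXint : Integrable (fun ω => (X ω - t ^ p) ^ 2) P) :
    (∫ ω, |X ω ^ (1/p) - t| ∂P) ≤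
      (∫ ω, (X ω - t ^ p) ^ 2 ∂P) ^ (1 / (2 * p)) + 2 * t := by
  have hq0 : 0 ≤ 1 / (2 * p) := by positivity
  have hq1 : 1 / (2 * p) ≤ 1 := by rw [div_le_one (by linarith)]; linarith
  have hsq : 0 ≤ᵐ[P] fun ω => (X ω - t ^ p) ^ 2 := ae_of_all _ fun _ => sq_nonneg _
  have hroot : Integrable (fun ω => |X ω - t ^ p| ^ (1 / p)) P := by
    simpa only [Real.abs_rpow_one_div_eq_sq_rpow] using hXint.rpow_of_le_one hsq hq0 hq1
  calc ∫ ω, |X ω ^ (1 / p) - t| ∂P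
      ≤ ∫ ω, (|X ω - t ^ p| ^ (1 / p) + 2 * t) ∂P :=
        integral_mono_of_nonneg (ae_of_all _ fun _ => abs_nonneg _)
          (hroot.add (integrable_const _))
          (ae_of_all _ fun ω => Real.abs_rpow_one_div_sub_le hp ht (X ω))
    _ = ∫ ω, |X ω - t ^ p| ^ (1 / p) ∂P + 2 * t := by
        rw [integral_add hroot (integrable_const _)]
        simp
    _ ≤ (∫ ω, (X ω - t ^ p) ^ 2 ∂P) ^ (1 / (2 * p)) + 2 * t := by
        gcongr
        simpa only [Real.abs_rpow_one_div_eq_sq_rpow] using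
          integral_rpow_le_rpow_integral hXint hsq hq0 hq1

/-- Crude bound: E|X^{1/p} − t| ≤ (E(X − t^p)²)^{1/(2p)} + 2t. -/
theorem root_estimate_crude {Ω : Type*} [MeasurableSpace Ω] (P : Measure Ω)
    [IsProbabilityMeasure P] (p t : ℝ) (hp : 1 ≤ p) (ht : 0 ≤ t)
    (X : Ω → ℝ) (hX : ∀ ω, 0 ≤ X ω) (hXmeas : Measurable X)
    (hXint : Integrable (fun ω => (X ω - t ^ p) ^ 2) P) :
    (∫ ω, |X ω ^ (1/p) - t| ∂P) ≤
      (∫ ω, (X ω - t ^ p) ^ 2 ∂P) ^ (1 / (2 * p)) + 2 * t :=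
  root_estimate_crude_general P p t hp ht X hXint
end
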